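/- Let (X,d) be a metric space, M a nonempty proper closed subset of X, and F : X∖M → (0,∞) a 1-Lipschitz function. Then the function i defined by i(x,y) = 2·log((F(x) + F(y) + d(x,y)) / (2·√(F(x)·F(y)))) for x,y ∈ X∖M is a metric on X∖M. -/
import Mathlib


open Real Filter

/-- Generalized Nikolov–Andreev function. -/
noncomputable def iNA {X : Type*} [MetricSpace X] (F : X → ℝ) (x y : X) : ℝ :=
  2 * Real.log ((F x + F y + dist x y) / (2 * Real.sqrt (F x * F y)))

private lemma amgm_sqrt {a b : ℝ} (ha : 0 < a) (hb : 0 < b) :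
    2 * Real.sqrt (a * b) ≤ a + b := by
  have h1 : Real.sqrt (a * b) = Real.sqrt a * Real.sqrt b := Real.sqrt_mul ha.le b
  nlinarith [sq_nonneg (Real.sqrt a - Real.sqrt b), Real.sq_sqrt ha.le, Real.sq_sqrt hb.le]

private lemma q_ge_one {a b d : ℝ} (ha : 0 < a) (hb : 0 < b) (hd : 0 ≤ d) :
    1 ≤ (a + b + d) / (2 * Real.sqrt (a * b)) := by
  have hs : 0 < Real.sqrt (a * b) := Real.sqrt_pos.2 (by positivity)
  rw [le_div_iff₀ (by positivity)]
  have := amgm_sqrt ha hb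
  linarith

theorem stmt_10 {X : Type*} [MetricSpace X] (M : Set X)
    (hMclosed : IsClosed M) (hMne : M.Nonempty) (hMproper : M ≠ Set.univ)
    (F : X → ℝ) (hFpos : ∀ x ∉ M, 0 < F x)
    (hFlip : ∀ x ∉ M, ∀ y ∉ M, |F x - F y| ≤ dist x y) :
    (∀ x ∉ M, ∀ y ∉ M, 0 ≤ iNA F x y) ∧
    (∀ x ∉ M, ∀ y ∉ M, (iNA F x y = 0 ↔ x = y)) ∧
    (∀ x ∉ M, ∀ y ∉ M, iNA F x y = iNA F y x) ∧
    (∀ x ∉ M, ∀ y ∉ M, ∀ z ∉ M, iNA F x y ≤ iNA F x z + iNA F z y) := by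
  refine ⟨?_, ?_, ?_, ?_⟩
  · intro x hx y hy
    have h := q_ge_one (hFpos x hx) (hFpos y hy) (dist_nonneg : 0 ≤ dist x y)
    have := Real.log_nonneg h
    unfold iNA
    linarith
  · intro x hx y hy
    have ha := hFpos x hx
    have hb := hFpos y hy
    have hs : 0 < Real.sqrt (F x * F y) := Real.sqrt_pos.2 (by positivity)
    constructor
    · intro h
      have h1 : Real.log ((F x + F y + dist x y) / (2 * Real.sqrt (F x * F y))) = 0 := by
        unfold iNA at h; linarith
      have hq := q_ge_one ha hb ((dist_nonneg : 0 ≤ dist x y))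
      have hq1 : (F x + F y + dist x y) / (2 * Real.sqrt (F x * F y)) = 1 := by
        rcases Real.log_eq_zero.1 h1 with h2 | h2 | h2
        · linarith
        · exact h2
        · linarith
      have heq : F x + F y + dist x y = 2 * Real.sqrt (F x * F y) := by
        rw [div_eq_one_iff_eq (by positivity)] at hq1
        linarith
      have := amgm_sqrt ha hb
      have hd0 : dist x y = 0 := by linarith [(dist_nonneg : 0 ≤ dist x y)]
      exact dist_eq_zero.1 hd0
    · intro h
      subst h
      have hsx : Real.sqrt (F x * F x) = F x := Real.sqrt_mul_self ha.le
      unfold iNA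
      rw [dist_self, hsx]
      rw [show F x + F x + 0 = 2 * F x by ring]
      rw [mul_div_mul_left _ _ (by norm_num : (2:ℝ) ≠ 0), div_self ha.ne', Real.log_one]
      ring
  · intro x hx y hy
    unfold iNA
    rw [dist_comm y x, mul_comm (F y) (F x), add_comm (F y) (F x)]
  · intro x hx y hy z hz
    have ha := hFpos x hx
    have hb := hFpos y hy
    have hc := hFpos z hz
    set a := F x with hadef
    set b := F y with hbdef
    set c := F z with hcdef
    set p := dist x z with hpdef
    set q := dist z y with hqdef
    have hp : 0 ≤ p := dist_nonneg
    have hq : 0 ≤ q := dist_nonneg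
    have hca : c ≤ a + p := by
      have := abs_le.1 (hFlip x hx z hz); linarith [this.1]
    have hcb : c ≤ b + q := by
      have := abs_le.1 (hFlip z hz y hy); linarith [this.2]
    have htri : dist x y ≤ p + q := dist_triangle x z y
    have key : 2 * c * (a + b + dist x y) ≤ (a + c + p) * (c + b + q) := by
      nlinarith [mul_nonneg (by linarith : (0:ℝ) ≤ a + p - c) (by linarith : (0:ℝ) ≤ b + q - c),
        mul_le_mul_of_nonneg_left htri (by linarith : (0:ℝ) ≤ 2 * c)]
    have hsab : 0 < Real.sqrt (a * b) := Real.sqrt_pos.2 (by positivity)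
    have hsac : 0 < Real.sqrt (a * c) := Real.sqrt_pos.2 (by positivity)
    have hscb : 0 < Real.sqrt (c * b) := Real.sqrt_pos.2 (by positivity)
    have hsprod : Real.sqrt (a * c) * Real.sqrt (c * b) = c * Real.sqrt (a * b) := by
      rw [← Real.sqrt_mul (by positivity) (c * b)]
      rw [show a * c * (c * b) = c ^ 2 * (a * b) by ring]
      rw [Real.sqrt_mul (by positivity) (a * b), Real.sqrt_sq hc.le]
    have hQxy : (0:ℝ) < (a + b + dist x y) / (2 * Real.sqrt (a * b)) := by
      have : (0:ℝ) < a + b + dist x y := by linarith [(dist_nonneg : 0 ≤ dist x y)]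
      positivity
    have hQxz : (0:ℝ) < (a + c + p) / (2 * Real.sqrt (a * c)) := by
      have : (0:ℝ) < a + c + p := by linarith
      positivity
    have hQzy : (0:ℝ) < (c + b + q) / (2 * Real.sqrt (c * b)) := by
      have : (0:ℝ) < c + b + q := by linarith
      positivity
    have hle : (a + b + dist x y) / (2 * Real.sqrt (a * b)) ≤
        ((a + c + p) / (2 * Real.sqrt (a * c))) * ((c + b + q) / (2 * Real.sqrt (c * b))) := by
      rw [div_mul_div_comm, div_le_div_iff₀ (by positivity) (by positivity)]
      have hexp : 2 * Real.sqrt (a * c) * (2 * Real.sqrt (c * b)) =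
          4 * c * Real.sqrt (a * b) := by
        rw [show 2 * Real.sqrt (a * c) * (2 * Real.sqrt (c * b)) =
          4 * (Real.sqrt (a * c) * Real.sqrt (c * b)) by ring, hsprod]; ring
      rw [hexp]
      nlinarith [mul_le_mul_of_nonneg_right key hsab.le]
    unfold iNA
    have hlog : Real.log ((a + b + dist x y) / (2 * Real.sqrt (a * b))) ≤
        Real.log ((a + c + p) / (2 * Real.sqrt (a * c))) +
        Real.log ((c + b + q) / (2 * Real.sqrt (c * b))) := by
      rw [← Real.log_mul hQxz.ne' hQzy.ne']
      exact Real.log_le_log hQxy hle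
    linarith
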